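/- arXiv:2004.07214 — 6 statements merged into one kernel-verified Lean document; each statement's English description precedes it below -/
import Mathlib

section
/- Let G be the comparability graph of a finite poset P = (V, ≤) of width α (i.e., every antichain of P has cardinality at most α). Then every minimal dominating set D of G satisfies |D| ≤ 2α. -/
/-!
Minimality gives every `v ∈ D` a private vertex `p v`, comparable to `v` and to no other member
of `D`. Split `D` according to whether `v ≤ p v` or `p v ≤ v`. On the first part `p` is injective
with antichain image, since `p u ≤ p v` would make `u ≤ p u ≤ p v` comparable to `p v`; dually on
the second part. Each part thus has at most `α` elements.
-/

open Set

/-- The closed neighborhood `N[v]` of a vertex. -/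
def closedNbhd {V : Type*} (G : SimpleGraph V) (v : V) : Set V :=
  insert v (G.neighborSet v)

/-- The closed neighborhood `N[S]` of a set of vertices. -/
def closedNbhdSet {V : Type*} (G : SimpleGraph V) (S : Set V) : Set V :=
  ⋃ v ∈ S, closedNbhd G v

/-- `D` is a dominating set of `G`. -/
def IsDomSet {V : Type*} (G : SimpleGraph V) (D : Set V) : Prop :=
  ∀ w, w ∈ closedNbhdSet G D

/-- `D` is a minimal dominating set of `G`. -/
def IsMinDomSet {V : Type*} (G : SimpleGraph V) (D : Set V) : Prop :=
  IsDomSet G D ∧ ∀ D' ⊂ D, ¬ IsDomSet G D'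

/-- The comparability graph of a poset: distinct vertices are adjacent iff comparable. -/
def compGraph (V : Type*) [PartialOrder V] : SimpleGraph V :=
  SimpleGraph.fromRel (fun x y => x ≤ y)

lemma mem_closedNbhdSet_iff {V : Type*} {G : SimpleGraph V} {S : Set V} {w : V} :
    w ∈ closedNbhdSet G S ↔ ∃ v ∈ S, w ∈ closedNbhd G v := by
  simp [closedNbhdSet]

lemma IsMinDomSet.exists_private {V : Type*} {G : SimpleGraph V} {D : Set V}
    (hD : IsMinDomSet G D) {v : V} (hv : v ∈ D) :
    ∃ q ∈ closedNbhd G v, ∀ u ∈ D, q ∈ closedNbhd G u → u = v := by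
  have hnot : ¬ IsDomSet G (D \ {v}) := hD.2 _ (sdiff_singleton_ssubset.mpr hv)
  obtain ⟨q, hq⟩ := not_forall.mp hnot
  have hpriv : ∀ u ∈ D, q ∈ closedNbhd G u → u = v := fun u hu hqu => by
    by_contra huv
    exact hq (mem_closedNbhdSet_iff.mpr ⟨u, ⟨hu, huv⟩, hqu⟩)
  obtain ⟨u, hu, hqu⟩ := mem_closedNbhdSet_iff.mp (hD.1 q)
  exact ⟨q, hpriv u hu hqu ▸ hqu, hpriv⟩

lemma mem_closedNbhd_compGraph_iff {V : Type*} [PartialOrder V] {u w : V} :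
    w ∈ closedNbhd (compGraph V) u ↔ u ≤ w ∨ w ≤ u := by
  by_cases hwu : w = u
  · simp [hwu, closedNbhd]
  · simp [closedNbhd, compGraph, hwu, Ne.symm hwu]

lemma IsMinDomSet.exists_private_comparable {V : Type*} [PartialOrder V] {D : Set V}
    (hD : IsMinDomSet (compGraph V) D) {v : V} (hv : v ∈ D) :
    ∃ q, (v ≤ q ∨ q ≤ v) ∧ ∀ u ∈ D, (u ≤ q ∨ q ≤ u) → u = v := by
  simpa only [mem_closedNbhd_compGraph_iff] using hD.exists_private hv

section Width

variable {V : Type*} [Preorder V] {α : ℕ} {S : Set V} {p : V → V}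

lemma ncard_le_of_le_private (hwidth : ∀ A : Set V, IsAntichain (· ≤ ·) A → A.ncard ≤ α)
    (hle : ∀ v ∈ S, v ≤ p v) (hpriv : ∀ u ∈ S, ∀ v ∈ S, u ≤ p v → u = v) :
    S.ncard ≤ α := by
  have hinj : InjOn p S := fun u hu v hv huv => hpriv u hu v hv (huv ▸ hle u hu)
  have hanti : IsAntichain (· ≤ ·) (p '' S) := by
    rintro _ ⟨u, hu, rfl⟩ _ ⟨v, hv, rfl⟩ hne hle'
    exact hne (congrArg p (hpriv u hu v hv ((hle u hu).trans hle')))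
  rw [← hinj.ncard_image]
  exact hwidth _ hanti

lemma ncard_le_of_private_le (hwidth : ∀ A : Set V, IsAntichain (· ≤ ·) A → A.ncard ≤ α)
    (hle : ∀ v ∈ S, p v ≤ v) (hpriv : ∀ u ∈ S, ∀ v ∈ S, p v ≤ u → u = v) :
    S.ncard ≤ α :=
  ncard_le_of_le_private (V := Vᵒᵈ) (fun A hA => hwidth A hA.to_dual) hle hpriv

end Width

theorem stmt0_general {V : Type*} [PartialOrder V] (α : ℕ)
    (hwidth : ∀ A : Set V, IsAntichain (· ≤ ·) A → A.ncard ≤ α)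
    (D : Set V) (hD : IsMinDomSet (compGraph V) D) :
    D.ncard ≤ 2 * α := by
  choose! p hcomp hpriv using fun v (hv : v ∈ D) => hD.exists_private_comparable hv
  have hsplit : D = {v ∈ D | v ≤ p v} ∪ {v ∈ D | p v ≤ v} := by
    ext v
    constructor
    · intro hv
      exact (hcomp v hv).imp (⟨hv, ·⟩) (⟨hv, ·⟩)
    · rintro (⟨hv, -⟩ | ⟨hv, -⟩) <;> exact hv
  have hup : {v ∈ D | v ≤ p v}.ncard ≤ α :=
    ncard_le_of_le_private hwidth (fun _ hv => hv.2)
      fun u hu v hv h => hpriv v hv.1 u hu.1 (Or.inl h)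
  have hdown : {v ∈ D | p v ≤ v}.ncard ≤ α :=
    ncard_le_of_private_le hwidth (fun _ hv => hv.2)
      fun u hu v hv h => hpriv v hv.1 u hu.1 (Or.inr h)
  calc D.ncard = ({v ∈ D | v ≤ p v} ∪ {v ∈ D | p v ≤ v}).ncard := congrArg ncard hsplit
    _ ≤ {v ∈ D | v ≤ p v}.ncard + {v ∈ D | p v ≤ v}.ncard := ncard_union_le _ _
    _ ≤ 2 * α := by omega

/-- If every antichain of a finite poset has at most `α` elements, then every minimal
dominating set `D` of its comparability graph satisfies `|D| ≤ 2α`. -/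
theorem stmt0 {V : Type*} [Fintype V] [PartialOrder V] (α : ℕ)
    (hwidth : ∀ A : Set V, IsAntichain (· ≤ ·) A → A.ncard ≤ α)
    (D : Set V) (hD : IsMinDomSet (compGraph V) D) :
    D.ncard ≤ 2 * α :=
  stmt0_general α hwidth D hD
end

section
/- Let G be the comparability graph of a finite poset P = (V, ≤) and let D be a minimal dominating set of G. Then D contains no three elements x, y, z with x < y < z in P; that is, every chain of P contained in D has at most two elements. -/
open Set

section Domination

variable {V : Type*} {G : SimpleGraph V} {D : Set V} {y : V}

lemma closedNbhd_subset_closedNbhdSet {S : Set V} {v : V} (hv : v ∈ S) :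
    closedNbhd G v ⊆ closedNbhdSet G S :=
  subset_biUnion_of_mem (u := closedNbhd G) hv

lemma IsDomSet.diff_singleton (hD : IsDomSet G D)
    (hy : closedNbhd G y ⊆ closedNbhdSet G (D \ {y})) : IsDomSet G (D \ {y}) := by
  intro w
  obtain ⟨v, hvD, hwv⟩ := mem_iUnion₂.1 (hD w)
  by_cases hvy : v = y
  · subst hvy
    exact hy hwv
  · exact closedNbhd_subset_closedNbhdSet (S := D \ {y}) ⟨hvD, hvy⟩ hwv

lemma IsMinDomSet.not_isDomSet_diff_singleton (hD : IsMinDomSet G D) (hy : y ∈ D) :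
    ¬ IsDomSet G (D \ {y}) :=
  hD.2 _ (sdiff_singleton_ssubset.2 hy)

end Domination

section Comparability

variable {V : Type*} [PartialOrder V]

lemma compGraph_adj {a b : V} : (compGraph V).Adj a b ↔ a ≠ b ∧ (a ≤ b ∨ b ≤ a) :=
  SimpleGraph.fromRel_adj _ a b

/-- Whatever lies above `y` lies above `x`, and whatever lies below `y` lies below `z`. -/
lemma closedNbhd_subset_union_of_lt_of_lt {x y z : V} (hxy : x < y) (hyz : y < z) :
    closedNbhd (compGraph V) y ⊆ closedNbhd (compGraph V) x ∪ closedNbhd (compGraph V) z := by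
  rintro w (rfl | hw)
  · exact Or.inl (Or.inr (compGraph_adj.2 ⟨hxy.ne, Or.inl hxy.le⟩))
  obtain ⟨-, hyw | hwy⟩ := compGraph_adj.1 hw
  · exact Or.inl (Or.inr (compGraph_adj.2 ⟨(hxy.trans_le hyw).ne, Or.inl (hxy.le.trans hyw)⟩))
  · exact Or.inr (Or.inr (compGraph_adj.2 ⟨(hwy.trans_lt hyz).ne', Or.inr (hwy.trans hyz.le)⟩))

end Comparability

theorem stmt1_general {V : Type*} [PartialOrder V]
    (D : Set V) (hD : IsMinDomSet (compGraph V) D) :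
    ∀ x ∈ D, ∀ y ∈ D, ∀ z ∈ D, ¬ (x < y ∧ y < z) := by
  rintro x hx y hy z hz ⟨hxy, hyz⟩
  refine hD.not_isDomSet_diff_singleton hy (hD.1.diff_singleton ?_)
  calc closedNbhd (compGraph V) y
      ⊆ closedNbhd (compGraph V) x ∪ closedNbhd (compGraph V) z :=
        closedNbhd_subset_union_of_lt_of_lt hxy hyz
    _ ⊆ closedNbhdSet (compGraph V) (D \ {y}) :=
        union_subset (closedNbhd_subset_closedNbhdSet ⟨hx, hxy.ne⟩)
          (closedNbhd_subset_closedNbhdSet ⟨hz, hyz.ne'⟩)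

/-- A minimal dominating set of the comparability graph of a finite poset contains
no three elements `x < y < z`; i.e., chains of the poset inside `D` have at most two
elements. -/
theorem stmt1 {V : Type*} [Fintype V] [PartialOrder V]
    (D : Set V) (hD : IsMinDomSet (compGraph V) D) :
    ∀ x ∈ D, ∀ y ∈ D, ∀ z ∈ D, ¬ (x < y ∧ y < z) :=
  stmt1_general D hD
end

section
/- Let G be a finite graph, D a minimal dominating set of G, u ∈ D a vertex having at least one neighbor in D, and v ∈ priv(D, u). Let X be a maximal independent set of the induced subgraph G[priv(D,u) ∖ N[v]], and let D' = (D ∖ {u}) ∪ X ∪ {v}. Then for every set D* with X ∪ {v} ⊆ D* ⊆ D', the edge set of G[D*] is a proper subset of the edge set of G[D], and v is an isolated vertex of G[D*]. -/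
open Set

/-- The set `priv(D, u)` of private neighbors of `u` with respect to `D`:
vertices `v` with `N[v] ∩ D = {u}`. -/
def privSet {V : Type*} (G : SimpleGraph V) (D : Set V) (u : V) : Set V :=
  {v | closedNbhd G v ∩ D = {u}}

/-- `X` is a maximal independent set of the subgraph of `G` induced by `S`. -/
def IsMaxIndepOn {V : Type*} (G : SimpleGraph V) (S X : Set V) : Prop :=
  X ⊆ S ∧ (∀ x ∈ X, ∀ y ∈ X, ¬ G.Adj x y) ∧
    ∀ X' ⊆ S, (∀ x ∈ X', ∀ y ∈ X', ¬ G.Adj x y) → X ⊆ X' → X' = X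

/-- The edge set of the subgraph of `G` induced by `S`. -/
def edgesIn {V : Type*} (G : SimpleGraph V) (S : Set V) : Set (Sym2 V) :=
  {e ∈ G.edgeSet | ∀ x ∈ e, x ∈ S}

/-! Every edge of `G[D*]` has both ends in `D ∖ {u}`: a vertex of `X` is a private neighbor of `u`,
so it has no neighbor in `D ∖ {u}`, none in the independent set `X`, and none at `v` because `X`
avoids `N[v]`; `v` itself is isolated for the same reasons. Hence `G[D*]` misses at least the edge
from `u` to its neighbor in `D`. -/

section EdgesIn

variable {V : Type*} {G : SimpleGraph V}

theorem edgesIn_subset_of_forall_adj {S T : Set V}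
    (h : ∀ a ∈ S, ∀ b ∈ S, G.Adj a b → a ∈ T) : edgesIn G S ⊆ edgesIn G T := by
  rintro e ⟨he, hS⟩
  induction e using Sym2.ind with
  | _ x y =>
    have hxy : G.Adj x y := he
    refine ⟨he, fun z hz => ?_⟩
    rcases Sym2.mem_iff.mp hz with rfl | rfl
    · exact h z (hS z (Sym2.mem_mk_left _ _)) y (hS y (Sym2.mem_mk_right _ _)) hxy
    · exact h z (hS z (Sym2.mem_mk_right _ _)) x (hS x (Sym2.mem_mk_left _ _)) hxy.symm

theorem edgesIn_diff_singleton_ssubset {D : Set V} {u w : V} (hu : u ∈ D) (hw : w ∈ D)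
    (huw : G.Adj u w) : edgesIn G (D \ {u}) ⊂ edgesIn G D := by
  have huw_mem : s(u, w) ∈ edgesIn G D := by
    refine ⟨huw, fun z hz => ?_⟩
    rcases Sym2.mem_iff.mp hz with rfl | rfl
    exacts [hu, hw]
  refine ssubset_of_subset_of_ne (edgesIn_subset_of_forall_adj fun a ha _ _ _ => ha.1) ?_
  intro h
  exact (h ▸ huw_mem).2 u (Sym2.mem_mk_left u w) |>.2 rfl

end EdgesIn

section PrivateNeighbors

variable {V : Type*} {G : SimpleGraph V} {D : Set V} {u : V}

theorem eq_of_adj_of_mem_privSet {a b : V} (ha : a ∈ privSet G D u) (hb : b ∈ D)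
    (hab : G.Adj a b) : b = u := by
  have hb' : b ∈ closedNbhd G a ∩ D := ⟨mem_insert_of_mem a hab, hb⟩
  rwa [show closedNbhd G a ∩ D = {u} from ha] at hb'

variable {v : V} {X : Set V}

theorem not_adj_of_mem_swap (hv : v ∈ privSet G D u)
    (hX : X ⊆ privSet G D u \ closedNbhd G v) {a : V} (ha : a ∈ (D \ {u}) ∪ X ∪ {v}) :
    ¬ G.Adj v a := by
  intro hva
  rcases ha with (⟨haD, hau⟩ | haX) | rfl
  · exact hau (eq_of_adj_of_mem_privSet hv haD hva)
  · exact (hX haX).2 (mem_insert_of_mem v hva)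
  · exact G.loopless.irrefl _ hva

theorem mem_diff_of_adj_of_mem_swap (hv : v ∈ privSet G D u)
    (hX : X ⊆ privSet G D u \ closedNbhd G v) (hXind : ∀ x ∈ X, ∀ y ∈ X, ¬ G.Adj x y)
    {a b : V} (ha : a ∈ (D \ {u}) ∪ X ∪ {v}) (hb : b ∈ (D \ {u}) ∪ X ∪ {v})
    (hab : G.Adj a b) : a ∈ D \ {u} := by
  rcases ha with (haD | haX) | rfl
  · exact haD
  · exfalso
    rcases hb with (⟨hbD, hbu⟩ | hbX) | rfl
    · exact hbu (eq_of_adj_of_mem_privSet (hX haX).1 hbD hab)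
    · exact hXind a haX b hbX hab
    · exact (hX haX).2 (mem_insert_of_mem _ hab.symm)
  · exact absurd hab (not_adj_of_mem_swap hv hX hb)

end PrivateNeighbors

theorem stmt5_general {V : Type*} (G : SimpleGraph V)
    (D : Set V)
    (u : V) (hu : u ∈ D) (hnb : ∃ w ∈ D, G.Adj u w)
    (v : V) (hv : v ∈ privSet G D u)
    (X : Set V) (hX : IsMaxIndepOn G (privSet G D u \ closedNbhd G v) X)
    (D' : Set V) (hD' : D' = (D \ {u}) ∪ X ∪ {v}) :
    ∀ Dstar : Set V, X ∪ {v} ⊆ Dstar → Dstar ⊆ D' →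
      edgesIn G Dstar ⊂ edgesIn G D ∧ ∀ w ∈ Dstar, ¬ G.Adj v w := by
  intro Dstar _ hDstar
  subst hD'
  obtain ⟨w, hwD, huw⟩ := hnb
  obtain ⟨hXsub, hXind, -⟩ := hX
  have hsub : edgesIn G Dstar ⊆ edgesIn G (D \ {u}) :=
    edgesIn_subset_of_forall_adj fun a ha b hb hab =>
      mem_diff_of_adj_of_mem_swap hv hXsub hXind (hDstar ha) (hDstar hb) hab
  exact ⟨hsub.trans_ssubset (edgesIn_diff_singleton_ssubset hu hwD huw),
    fun a ha => not_adj_of_mem_swap hv hXsub (hDstar ha)⟩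

/-- With `D` a minimal dominating set, `u ∈ D` having a neighbor in `D`,
`v ∈ priv(D,u)`, `X` a maximal independent set of `G[priv(D,u) ∖ N[v]]` and
`D' = (D ∖ {u}) ∪ X ∪ {v}`: for every `D*` with `X ∪ {v} ⊆ D* ⊆ D'`, the edge set of
`G[D*]` is a proper subset of the edge set of `G[D]` and `v` is isolated in `G[D*]`. -/
theorem stmt5 {V : Type*} [Fintype V] (G : SimpleGraph V)
    (D : Set V) (hD : IsMinDomSet G D)
    (u : V) (hu : u ∈ D) (hnb : ∃ w ∈ D, G.Adj u w)
    (v : V) (hv : v ∈ privSet G D u)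
    (X : Set V) (hX : IsMaxIndepOn G (privSet G D u \ closedNbhd G v) X)
    (D' : Set V) (hD' : D' = (D \ {u}) ∪ X ∪ {v}) :
    ∀ Dstar : Set V, X ∪ {v} ⊆ Dstar → Dstar ⊆ D' →
      edgesIn G Dstar ⊂ edgesIn G D ∧ ∀ w ∈ Dstar, ¬ G.Adj v w :=
  stmt5_general G D u hu hnb v hv X hX D' hD'
end

section
/- Let G be the comparability graph of a finite poset P = (V, ≤). Let B ⊆ V and let R ⊆ ↑Max(B) with R ∩ B = ∅. Then the inclusion-minimal subsets D ⊆ R with B ⊆ N[D] are exactly the inclusion-minimal subsets D ⊆ R with Max(B) ⊆ N[D]; that is, the minimal red dominating sets of G(R, B) coincide with the minimal red dominating sets of G(R, Max(B)). -/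
open Set

/-- `D` is a minimal red dominating set of `G(R, B)`: an inclusion-minimal subset of `R`
whose closed neighborhood contains `B`. -/
def IsMinRedDom {V : Type*} (G : SimpleGraph V) (R B D : Set V) : Prop :=
  D ⊆ R ∧ B ⊆ closedNbhdSet G D ∧ ∀ D' ⊂ D, ¬ B ⊆ closedNbhdSet G D'

lemma mem_closedNbhdSet {V : Type*} {G : SimpleGraph V} {S : Set V} {x : V} :
    x ∈ closedNbhdSet G S ↔ ∃ v ∈ S, x ∈ closedNbhd G v := by
  simp [closedNbhdSet]

lemma mem_closedNbhd_compGraph {V : Type*} [PartialOrder V] {v x : V} :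
    x ∈ closedNbhd (compGraph V) v ↔ v ≤ x ∨ x ≤ v := by
  rcases eq_or_ne x v with rfl | hxv
  · simp [closedNbhd]
  · simp [closedNbhd, compGraph, hxv, hxv.symm]

lemma isMinRedDom_congr {V : Type*} {G : SimpleGraph V} {R B B' : Set V}
    (h : ∀ D ⊆ R, B ⊆ closedNbhdSet G D ↔ B' ⊆ closedNbhdSet G D) (D : Set V) :
    IsMinRedDom G R B D ↔ IsMinRedDom G R B' D := by
  refine and_congr_right fun hDR => and_congr (h D hDR) (forall₂_congr fun D' hD' => ?_)
  rw [h D' (hD'.subset.trans hDR)]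

lemma Maximal.not_le_of_le_of_notMem {α : Type*} [PartialOrder α] {B : Set α} {s d m : α}
    (hs : Maximal (· ∈ B) s) (hsd : s ≤ d) (hd : d ∉ B) (hm : m ∈ B) : ¬ d ≤ m := by
  intro hdm
  have hsm : s = m := hs.eq_of_le hm (hsd.trans hdm)
  exact hd (le_antisymm (hsm ▸ hdm) hsd ▸ hs.prop)

/-- A red vertex `d` comparable to a maximal blue vertex `m` cannot lie below `m` (it would be
squeezed between `m` and the maximal element below `d`), so `m ≤ d` and `d` dominates everything
in `B` below `m`. -/
lemma subset_closedNbhdSet_compGraph_iff {V : Type*} [PartialOrder V] {B R D : Set V}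
    (hB : ∀ b ∈ B, ∃ m, b ≤ m ∧ Maximal (· ∈ B) m)
    (hR : R ⊆ {v | ∃ s, Maximal (· ∈ B) s ∧ s ≤ v}) (hRB : Disjoint R B) (hD : D ⊆ R) :
    B ⊆ closedNbhdSet (compGraph V) D ↔
      {m | Maximal (· ∈ B) m} ⊆ closedNbhdSet (compGraph V) D := by
  refine ⟨fun h m hm => h hm.prop, fun h b hb => ?_⟩
  obtain ⟨m, hbm, hm⟩ := hB b hb
  obtain ⟨d, hdD, hmN⟩ := mem_closedNbhdSet.1 (h hm)
  have hdB : d ∉ B := hRB.notMem_of_mem_left (hD hdD)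
  obtain ⟨s, hs, hsd⟩ := hR (hD hdD)
  have hmd : m ≤ d :=
    (mem_closedNbhd_compGraph.1 hmN).resolve_left (hs.not_le_of_le_of_notMem hsd hdB hm.prop)
  exact mem_closedNbhdSet.2 ⟨d, hdD, mem_closedNbhd_compGraph.2 (.inr (hbm.trans hmd))⟩

/-- In the comparability graph of a finite poset, for `B ⊆ V` and `R ⊆ ↑Max(B)` with
`R ∩ B = ∅`, the minimal red dominating sets of `G(R, B)` coincide with the minimal red
dominating sets of `G(R, Max(B))`. -/
theorem stmt7 {V : Type*} [Fintype V] [PartialOrder V] (B R : Set V)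
    (MaxB : Set V) (hMaxB : MaxB = {x ∈ B | ∀ y ∈ B, x ≤ y → y = x})
    (hR : R ⊆ {v : V | ∃ s ∈ MaxB, s ≤ v}) (hRB : R ∩ B = ∅) :
    ∀ D : Set V,
      IsMinRedDom (compGraph V) R B D ↔ IsMinRedDom (compGraph V) R MaxB D := by
  have hMax : MaxB = {m | Maximal (· ∈ B) m} := by
    simp_rw [hMaxB, maximal_iff, eq_comm]
  subst hMax
  exact isMinRedDom_congr fun D hD => subset_closedNbhdSet_compGraph_iff
    (fun b hb => (toFinite B).exists_le_maximal hb) hR (disjoint_iff_inter_eq_empty.2 hRB) hD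
end

section
/- Let P = (V, ≤) be a finite poset with realizer ≤_1, …, ≤_d and let G be the incomparability graph of P. Let I be an irredundant set of G with |I| ≥ 3d, with first layer A(I) = (a_1,…,a_d), second layer B(I) = (b_1,…,b_d), third layer C(I) = (c_1,…,c_d), and border T(I) the set of entries of these three layers. Let u ∈ I ∖ T(I) and let v ∈ priv(I, u) with v ≠ u. Then v < b_k in P for every k ∈ {1,…,d}. -/
open Set

/-- The incomparability graph of a poset: distinct vertices are adjacent iff incomparable. -/
def incompGraph (V : Type*) [PartialOrder V] : SimpleGraph V :=
  SimpleGraph.fromRel (fun x y => ¬ x ≤ y ∧ ¬ y ≤ x)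

/-- `a : Fin d → V` is the (first) layer of `S` with respect to the linear orders `lin`:
`a i` is the maximum, with respect to the `i`-th linear order, of `S` minus the
previously chosen entries `a j`, `j < i`. -/
def IsLayer {V : Type*} {d : ℕ} (lin : Fin d → LinearOrder V) (S : Set V)
    (a : Fin d → V) : Prop :=
  ∀ i : Fin d, a i ∈ S \ (a '' {j | j < i}) ∧
    ∀ y ∈ S \ (a '' {j | j < i}), (lin i).le y (a i)

/-!
Suppose `v ≮ b k`. Being a private neighbour of `u`, the vertex `v` is comparable to every
other element of `I`, so `b k < v`. No `c j` can lie above `v`: then `b k ≤ c j`, which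
contradicts the maximality of `b k` in the `k`-th linear order among the candidates for the
second layer, a set containing `c j`. Hence every `c j < v`. But `u` is a candidate for every
entry of the third layer, so `u ≤_j c j ≤_j v` for each `j`, i.e. `u ≤ v`, whereas `u` and `v`
are adjacent in the incomparability graph.
-/

section PrivateNeighbor

variable {V : Type*} {G : SimpleGraph V} {I : Set V} {u v w : V}

theorem mem_closedNbhd_of_mem_privSet (hv : v ∈ privSet G I u) : u ∈ closedNbhd G v :=
  (Set.ext_iff.mp hv u).mpr rfl |>.1

theorem eq_of_mem_privSet (hv : v ∈ privSet G I u) (hw : w ∈ closedNbhd G v) (hwI : w ∈ I) :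
    w = u :=
  (Set.ext_iff.mp hv w).mp ⟨hw, hwI⟩

theorem notMem_of_mem_privSet (hv : v ∈ privSet G I u) (hvu : v ≠ u) : v ∉ I :=
  fun hvI => hvu (eq_of_mem_privSet hv (Set.mem_insert v _) hvI)

end PrivateNeighbor

section Incomparability

variable {V : Type*} [PartialOrder V] {I : Set V} {u v w : V}

theorem incompGraph_adj {x y : V} :
    (incompGraph V).Adj x y ↔ x ≠ y ∧ ¬ x ≤ y ∧ ¬ y ≤ x := by
  simp only [incompGraph, SimpleGraph.fromRel_adj]
  tauto

theorem not_le_of_mem_privSet (hv : v ∈ privSet (incompGraph V) I u) (hvu : v ≠ u) :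
    ¬ u ≤ v := by
  rcases mem_closedNbhd_of_mem_privSet hv with rfl | hadj
  · exact absurd rfl hvu
  · exact (incompGraph_adj.mp hadj).2.2

theorem lt_or_lt_of_mem_privSet (hv : v ∈ privSet (incompGraph V) I u) (hvu : v ≠ u)
    (hwI : w ∈ I) (hwu : w ≠ u) : v < w ∨ w < v := by
  have hvw : v ≠ w := fun h => notMem_of_mem_privSet hv hvu (h ▸ hwI)
  have hnadj : ¬ (incompGraph V).Adj v w :=
    fun hadj => hwu (eq_of_mem_privSet hv (Set.mem_insert_of_mem v hadj) hwI)
  rw [incompGraph_adj] at hnadj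
  by_cases hle : v ≤ w
  · exact Or.inl (lt_of_le_of_ne hle hvw)
  · have hwv : w ≤ v := by tauto
    exact Or.inr (lt_of_le_of_ne hwv (Ne.symm hvw))

end Incomparability

section Layers

variable {V : Type*} {d : ℕ} {lin : Fin d → LinearOrder V} {S : Set V} {a : Fin d → V}

def IsRealizer [PartialOrder V] (lin : Fin d → LinearOrder V) : Prop :=
  ∀ x y : V, x ≤ y ↔ ∀ i : Fin d, (lin i).le x y

theorem IsLayer.mem (ha : IsLayer lin S a) (i : Fin d) : a i ∈ S :=
  (ha i).1.1

theorem IsLayer.le_of_mem (ha : IsLayer lin S a) {y : V} (hy : y ∈ S \ range a) (i : Fin d) :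
    (lin i).le y (a i) :=
  (ha i).2 y ⟨hy.1, fun ⟨j, _, hj⟩ => hy.2 ⟨j, hj⟩⟩

theorem IsLayer.not_le_of_mem [PartialOrder V] (hlin : IsRealizer lin) (ha : IsLayer lin S a)
    {y : V} (hy : y ∈ S \ range a) (i : Fin d) : ¬ a i ≤ y := fun hle =>
  hy.2 ⟨i, (lin i).le_antisymm _ _ ((hlin _ _).mp hle i) (ha.le_of_mem hy i)⟩

theorem IsLayer.le_of_forall_le [PartialOrder V] (hlin : IsRealizer lin) (ha : IsLayer lin S a)
    {y z : V} (hy : y ∈ S \ range a) (hz : ∀ i, a i ≤ z) : y ≤ z :=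
  (hlin _ _).mpr fun i => (lin i).le_trans _ _ _ (ha.le_of_mem hy i) ((hlin _ _).mp (hz i) i)

end Layers

theorem stmt12_general {V : Type*} [PartialOrder V] (d : ℕ)
    (lin : Fin d → LinearOrder V)
    (hreal : ∀ x y : V, x ≤ y ↔ ∀ i : Fin d, (lin i).le x y)
    (I : Set V)
    (a b c : Fin d → V)
    (hb : IsLayer lin (I \ Set.range a) b)
    (hc : IsLayer lin (I \ (Set.range a ∪ Set.range b)) c)
    (u : V) (hu : u ∈ I \ (Set.range a ∪ Set.range b ∪ Set.range c))
    (v : V) (hv : v ∈ privSet (incompGraph V) I u) (hvu : v ≠ u) :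
    ∀ k : Fin d, v < b k := by
  rw [← sdiff_sdiff] at hc
  rw [← sdiff_sdiff, ← sdiff_sdiff] at hu
  have hne_u {x : V} (hx : x ∈ range b ∪ range c) : x ≠ u := by
    rintro rfl
    rcases hx with hx | hx
    exacts [hu.1.2 hx, hu.2 hx]
  have hcomp {x : V} (hxI : x ∈ I) (hx : x ∈ range b ∪ range c) : v < x ∨ x < v :=
    lt_or_lt_of_mem_privSet hv hvu hxI (hne_u hx)
  intro k
  by_contra hvb
  have hbv : b k < v := (hcomp (hb.mem k).1 (Or.inl ⟨k, rfl⟩)).resolve_left hvb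
  have hcv (j : Fin d) : c j ≤ v := by
    refine ((hcomp (hc.mem j).1.1 (Or.inr ⟨j, rfl⟩)).resolve_left fun hvc => ?_).le
    exact hb.not_le_of_mem hreal (hc.mem j) k (hbv.trans hvc).le
  exact not_le_of_mem_privSet hv hvu (hc.le_of_forall_le hreal hu hcv)

/-- Let `P` be a finite poset realized by linear orders `lin 1, …, lin d`, `G` its
incomparability graph, and `I` an irredundant set of `G` with `|I| ≥ 3d`, with layers
`a, b, c` forming the border `T(I)`.  For every `u ∈ I ∖ T(I)` and every
`v ∈ priv(I, u)` with `v ≠ u`, we have `v < b k` in `P` for every `k`. -/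
theorem stmt12 {V : Type*} [Fintype V] [PartialOrder V] (d : ℕ)
    (lin : Fin d → LinearOrder V)
    (hreal : ∀ x y : V, x ≤ y ↔ ∀ i : Fin d, (lin i).le x y)
    (I : Set V)
    (hirr : ∀ x ∈ I, privSet (incompGraph V) I x ≠ ∅)
    (hcard : 3 * d ≤ I.ncard)
    (a b c : Fin d → V)
    (ha : IsLayer lin I a)
    (hb : IsLayer lin (I \ Set.range a) b)
    (hc : IsLayer lin (I \ (Set.range a ∪ Set.range b)) c)
    (u : V) (hu : u ∈ I \ (Set.range a ∪ Set.range b ∪ Set.range c))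
    (v : V) (hv : v ∈ privSet (incompGraph V) I u) (hvu : v ≠ u) :
    ∀ k : Fin d, v < b k :=
  stmt12_general d lin hreal I a b c hb hc u hu v hv hvu
end

section
/- Let H be a finite hypergraph and let t ≥ 1 be an integer. Suppose X ⊆ V(H) is of minimum cardinality among all sets that are contained in no hyperedge of H but every subset of which of cardinality at most t−1 is contained in some hyperedge of H. Then |X| ≥ t, and for every x ∈ X there exists a hyperedge E of H with E ∩ X = X ∖ {x}. -/
open Set

section

variable {α : Type*}

lemma Set.inter_eq_sdiff_singleton_of_sdiff_subset {X S : Set α} {x : α} (hx : x ∈ X)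
    (hXS : ¬ X ⊆ S) (hdiff : X \ {x} ⊆ S) : S ∩ X = X \ {x} := by
  refine Subset.antisymm (fun y ⟨hyS, hyX⟩ => ⟨hyX, ?_⟩) fun y hy => ⟨hdiff hy, hy.1⟩
  rintro rfl
  refine hXS fun z hz => ?_
  by_cases hzy : z = y
  · exact hzy ▸ hyS
  · exact hdiff ⟨hz, hzy⟩

lemma sub_one_lt_ncard_of_not_covered {E : Set (Set α)} {t : ℕ} {X : Set α}
    (hX : ¬ ∃ S ∈ E, X ⊆ S) (hsmall : ∀ Y ⊆ X, Y.ncard ≤ t - 1 → ∃ S ∈ E, Y ⊆ S) :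
    t - 1 < X.ncard :=
  not_le.1 fun h => hX (hsmall X subset_rfl h)

end

theorem stmt15_general {α : Type*} (E : Set (Set α)) (t : ℕ)
    (X : Set α)
    (hX : (¬ ∃ S ∈ E, X ⊆ S) ∧ ∀ Y ⊆ X, Y.ncard ≤ t - 1 → ∃ S ∈ E, Y ⊆ S)
    (hmin : ∀ X' : Set α, (¬ ∃ S ∈ E, X' ⊆ S) →
      (∀ Y ⊆ X', Y.ncard ≤ t - 1 → ∃ S ∈ E, Y ⊆ S) → X.ncard ≤ X'.ncard) :
    t ≤ X.ncard ∧ ∀ x ∈ X, ∃ S ∈ E, S ∩ X = X \ {x} := by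
  obtain ⟨hX, hsmall⟩ := hX
  have hlt := sub_one_lt_ncard_of_not_covered hX hsmall
  refine ⟨by omega, fun x hx => ?_⟩
  -- An infinite `X` would have `ncard` 0 (junk value), so it would be covered.
  have hfin : X.Finite := finite_of_ncard_pos (by omega)
  obtain ⟨S, hSE, hS⟩ : ∃ S ∈ E, X \ {x} ⊆ S := by
    by_contra hnot
    have := hmin (X \ {x}) hnot fun Y hY => hsmall Y (hY.trans sdiff_subset)
    exact (ncard_sdiff_singleton_lt_of_mem hx hfin).not_ge this
  exact ⟨S, hSE, inter_eq_sdiff_singleton_of_sdiff_subset hx (fun h => hX ⟨S, hSE, h⟩) hS⟩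

/-- Let `H` be a finite hypergraph with hyperedge family `E` and `t ≥ 1`.  If `X` is of
minimum cardinality among all sets contained in no hyperedge but all of whose subsets of
cardinality at most `t - 1` are contained in some hyperedge, then `|X| ≥ t` and for every
`x ∈ X` there is a hyperedge `S` with `S ∩ X = X ∖ {x}`. -/
theorem stmt15 {α : Type*} [Fintype α] (E : Set (Set α)) (t : ℕ) (ht : 1 ≤ t)
    (X : Set α)
    (hX : (¬ ∃ S ∈ E, X ⊆ S) ∧ ∀ Y ⊆ X, Y.ncard ≤ t - 1 → ∃ S ∈ E, Y ⊆ S)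
    (hmin : ∀ X' : Set α, (¬ ∃ S ∈ E, X' ⊆ S) →
      (∀ Y ⊆ X', Y.ncard ≤ t - 1 → ∃ S ∈ E, Y ⊆ S) → X.ncard ≤ X'.ncard) :
    t ≤ X.ncard ∧ ∀ x ∈ X, ∃ S ∈ E, S ∩ X = X \ {x} :=
  stmt15_general E t X hX hmin
end
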